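/- For every j ∈ {0, 1, …, ℓ}, the matrix E_{(ℓ,−j),(ℓ+1,−j)} + E_{(ℓ,j),(ℓ+1,j)} belongs to the real Lie algebra L generated by A, B₁, B₂, B₃. -/

import Mathlib

open Matrix

attribute [local instance] LieRing.ofAssociativeRing

/-- The index set `J_ℓ = {(j,k) : j ∈ {ℓ, ℓ+1}, -j ≤ k ≤ j}`. -/
noncomputable def Jset (l : ℕ) : Finset (ℤ × ℤ) :=
  (({(l : ℤ), (l : ℤ) + 1} : Finset ℤ) ×ˢ Finset.Icc (-((l : ℤ) + 1)) ((l : ℤ) + 1)).filter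
    fun x => -x.1 ≤ x.2 ∧ x.2 ≤ x.1

/-- The space of complex matrices indexed by `J_ℓ`. -/
abbrev Mat (l : ℕ) := Matrix (Jset l) (Jset l) ℂ

/-- `e_{a,b}`: matrix with a single entry `1` at position `(a,b)`. -/
def eM (l : ℕ) (a b : ℤ × ℤ) : Mat l :=
  fun x y => if (x : ℤ × ℤ) = a ∧ (y : ℤ × ℤ) = b then 1 else 0

/-- `E_{a,b} = e_{a,b} - e_{b,a}`. -/
def Em (l : ℕ) (a b : ℤ × ℤ) : Mat l := eM l a b - eM l b a

/-- `F_{a,b} = i e_{a,b} + i e_{b,a}`. -/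
def Fm (l : ℕ) (a b : ℤ × ℤ) : Mat l := Complex.I • eM l a b + Complex.I • eM l b a

/-- `D_{a,b} = i e_{a,a} - i e_{b,b}`. -/
def Dm (l : ℕ) (a b : ℤ × ℤ) : Mat l := Complex.I • eM l a a - Complex.I • eM l b b

/-- `p_{ℓ,m} = -√(((ℓ+1)² - m²)/((2ℓ+1)(2ℓ+3)))`. -/
noncomputable def pc (l : ℕ) (m : ℤ) : ℝ :=
  -Real.sqrt ((((l : ℝ) + 1) ^ 2 - (m : ℝ) ^ 2) / ((2 * (l : ℝ) + 1) * (2 * (l : ℝ) + 3)))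

/-- `q_{ℓ,m} = √(((ℓ-m+2)(ℓ-m+1))/(4(2ℓ+1)(2ℓ+3)))`. -/
noncomputable def qc (l : ℕ) (m : ℤ) : ℝ :=
  Real.sqrt (((l : ℝ) - (m : ℝ) + 2) * ((l : ℝ) - (m : ℝ) + 1) /
    (4 * (2 * (l : ℝ) + 1) * (2 * (l : ℝ) + 3)))

/-- The control potential `B₁`. -/
noncomputable def B1 (l : ℕ) : Mat l :=
  ∑ m ∈ Finset.Icc (-(l : ℤ)) (l : ℤ),
    ((-qc l m) • Fm l ((l : ℤ), m) ((l : ℤ) + 1, m - 1)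
      + qc l (-m) • Fm l ((l : ℤ), m) ((l : ℤ) + 1, m + 1))

/-- The control potential `B₂`. -/
noncomputable def B2 (l : ℕ) : Mat l :=
  ∑ m ∈ Finset.Icc (-(l : ℤ)) (l : ℤ),
    (qc l m • Em l ((l : ℤ), m) ((l : ℤ) + 1, m - 1)
      + qc l (-m) • Em l ((l : ℤ), m) ((l : ℤ) + 1, m + 1))

/-- The control potential `B₃`. -/
noncomputable def B3 (l : ℕ) : Mat l :=
  ∑ m ∈ Finset.Icc (-(l : ℤ)) (l : ℤ), pc l m • Fm l ((l : ℤ), m) ((l : ℤ) + 1, m)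

/-- The (traceless) drift matrix `A`. -/
noncomputable def Am (l : ℕ) : Mat l :=
  (∑ k ∈ Finset.Icc (-(l : ℤ)) (l : ℤ),
      (Complex.I * (2 * (l : ℂ) + 3) / 2) • eM l ((l : ℤ), k) ((l : ℤ), k))
    + ∑ k ∈ Finset.Icc (-((l : ℤ) + 1)) ((l : ℤ) + 1),
      (-(Complex.I * (2 * (l : ℂ) + 1) / 2)) • eM l ((l : ℤ) + 1, k) ((l : ℤ) + 1, k)

/-!
Write `F_m, E_m, D_m` for `F, E, D` on the pair `(ℓ,m), (ℓ+1,m)`. For fixed `m` they span a copy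
of `su(2)`, and pairs with different `m` commute. Since `B₃ = Σ p_m F_m` and
`[A, F_m] = -(2ℓ+2) E_m`, the real coefficient vectors `c` with `Σ c_m E_m ∈ L` form a linear
space that contains `p` and is closed under `c ↦ p² c`, because
`[[B₃, Σ c_m E_m], B₃] = 4 Σ p_m² c_m E_m`. On `|m| ≤ ℓ` the value `p_m²` determines `|m|` and
`p_m ≠ 0`, so multiplying `p` by `∏_{0 ≤ i ≤ ℓ, i ≠ j} (p² - p_i²)` leaves an even vector
supported exactly on `m = ±j`.
-/

lemma mem_Jset {l : ℕ} {x : ℤ × ℤ} :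
    x ∈ Jset l ↔ (x.1 = l ∨ x.1 = l + 1) ∧ -x.1 ≤ x.2 ∧ x.2 ≤ x.1 := by
  simp only [Jset, Finset.mem_filter, Finset.mem_product, Finset.mem_insert,
    Finset.mem_singleton, Finset.mem_Icc]
  constructor
  · rintro ⟨⟨hlevel, -⟩, hrange⟩
    exact ⟨hlevel, hrange⟩
  · rintro ⟨hlevel, hrange⟩
    exact ⟨⟨hlevel, by omega, by omega⟩, hrange⟩

lemma eM_mul_eM (l : ℕ) (a b c d : ℤ × ℤ) :
    eM l a b * eM l c d = if b = c ∧ b ∈ Jset l then eM l a d else 0 := by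
  ext x y
  rw [Matrix.mul_apply]
  split_ifs with h
  · obtain ⟨rfl, hb⟩ := h
    rw [Finset.sum_eq_single ⟨b, hb⟩ (fun z _ hz => by simp [eM, Subtype.ext_iff.not.mp hz])
      (by simp)]
    by_cases hx : (x : ℤ × ℤ) = a <;> simp [eM, hx]
  · refine Finset.sum_eq_zero fun z _ => ?_
    by_cases hz : (z : ℤ × ℤ) = b
    · have : ¬ ((z : ℤ × ℤ) = c ∧ (y : ℤ × ℤ) = d) := fun hc => h ⟨hz ▸ hc.1, hz ▸ z.2⟩
      simp [eM, this]
    · simp [eM, hz]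

noncomputable def driftCoeff (l : ℕ) (x : ℤ × ℤ) : ℂ :=
  if x.1 = l then Complex.I * (2 * l + 3) / 2 else -(Complex.I * (2 * l + 1) / 2)

lemma Am_eq_diagonal (l : ℕ) : Am l = diagonal fun x : Jset l => driftCoeff l x := by
  ext ⟨⟨x1, x2⟩, hx⟩ ⟨⟨y1, y2⟩, hy⟩
  obtain ⟨hxl, hx2⟩ := mem_Jset.mp hx
  simp only at hxl hx2
  by_cases hxy : (x1, x2) = (y1, y2)
  · simp only [Prod.mk.injEq] at hxy
    obtain ⟨rfl, rfl⟩ := hxy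
    rcases hxl with rfl | rfl
    · simp [Am, eM, Matrix.sum_apply, driftCoeff, hx2.1, hx2.2]
    · simp [Am, eM, Matrix.sum_apply, driftCoeff, show -1 ≤ x2 + l by omega, hx2.2]
  · have : (⟨(x1, x2), hx⟩ : Jset l) ≠ ⟨(y1, y2), hy⟩ := fun h => hxy (congrArg Subtype.val h)
    have hcond : ∀ a k, ¬ ((x1 = a ∧ x2 = k) ∧ y1 = a ∧ y2 = k) := by
      rintro a k ⟨⟨rfl, rfl⟩, rfl, rfl⟩
      exact hxy rfl
    simp [Am, eM, Matrix.sum_apply, diagonal_apply_ne _ this, hcond]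

lemma lie_Am_eM (l : ℕ) (a b : ℤ × ℤ) :
    ⁅Am l, eM l a b⁆ = (driftCoeff l a - driftCoeff l b) • eM l a b := by
  ext x y
  by_cases h : (x : ℤ × ℤ) = a ∧ (y : ℤ × ℤ) = b <;> simp [Ring.lie_def, Am_eq_diagonal, eM, h]

def Fpair (l : ℕ) (m : ℤ) : Mat l := Fm l ((l : ℤ), m) ((l : ℤ) + 1, m)

def Epair (l : ℕ) (m : ℤ) : Mat l := Em l ((l : ℤ), m) ((l : ℤ) + 1, m)

def Dpair (l : ℕ) (m : ℤ) : Mat l := Dm l ((l : ℤ), m) ((l : ℤ) + 1, m)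

section Pairs

variable {l : ℕ} {m m' : ℤ}

lemma lie_Am_Fpair : ⁅Am l, Fpair l m⁆ = (-(2 * l + 2) : ℝ) • Epair l m := by
  simp only [Fpair, Epair, Fm, Em, lie_add, lie_smul, lie_Am_eM, driftCoeff, if_pos,
    show ((l : ℤ) + 1 ≠ l) by omega, if_false, ← Complex.coe_smul, smul_smul]
  push_cast
  match_scalars
  · linear_combination (2 * l + 2 : ℂ) * Complex.I_sq
  · linear_combination (-(2 * l + 2) : ℂ) * Complex.I_sq

lemma lie_Fpair_Epair_self (h1 : -(l : ℤ) ≤ m) (h2 : m ≤ l) :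
    ⁅Fpair l m, Epair l m⁆ = (-2 : ℝ) • Dpair l m := by
  have ha : ((l : ℤ), m) ∈ Jset l := mem_Jset.mpr ⟨Or.inl rfl, h1, h2⟩
  have hb : ((l : ℤ) + 1, m) ∈ Jset l := mem_Jset.mpr ⟨Or.inr rfl, by omega, by omega⟩
  simp only [Fpair, Epair, Dpair, Fm, Em, Dm, Ring.lie_def, mul_add, add_mul, mul_sub, sub_mul,
    smul_mul_assoc, mul_smul_comm, eM_mul_eM, ha, hb, Prod.mk.injEq, add_eq_left, left_eq_add,
    one_ne_zero, and_true, and_self, if_true, if_false, ← Complex.coe_smul]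
  match_scalars <;> simp <;> ring

lemma lie_Dpair_Fpair_self (h1 : -(l : ℤ) ≤ m) (h2 : m ≤ l) :
    ⁅Dpair l m, Fpair l m⁆ = (-2 : ℝ) • Epair l m := by
  have ha : ((l : ℤ), m) ∈ Jset l := mem_Jset.mpr ⟨Or.inl rfl, h1, h2⟩
  have hb : ((l : ℤ) + 1, m) ∈ Jset l := mem_Jset.mpr ⟨Or.inr rfl, by omega, by omega⟩
  simp only [Fpair, Epair, Dpair, Fm, Em, Dm, Ring.lie_def, mul_add, add_mul, mul_sub, sub_mul,
    smul_mul_assoc, mul_smul_comm, eM_mul_eM, ha, hb, Prod.mk.injEq, add_eq_left, left_eq_add,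
    one_ne_zero, and_true, and_self, if_true, if_false, ← Complex.coe_smul]
  match_scalars <;> simp <;> ring

lemma lie_Fpair_Epair_of_ne (h : m ≠ m') : ⁅Fpair l m, Epair l m'⁆ = 0 := by
  simp [Fpair, Epair, Fm, Em, Ring.lie_def, mul_sub, sub_mul, add_mul, mul_add,
    eM_mul_eM, h, Ne.symm h]

lemma lie_Dpair_Fpair_of_ne (h : m ≠ m') : ⁅Dpair l m, Fpair l m'⁆ = 0 := by
  simp [Fpair, Dpair, Fm, Dm, Ring.lie_def, mul_sub, sub_mul, add_mul, mul_add,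
    eM_mul_eM, h, Ne.symm h]

end Pairs

lemma lie_sum_smul_sum_smul_of_ne {R L ι : Type*} [CommRing R] [LieRing L] [LieAlgebra R L]
    (s : Finset ι) (c d : ι → R) (X Y : ι → L)
    (h : ∀ i ∈ s, ∀ j ∈ s, i ≠ j → ⁅X i, Y j⁆ = 0) :
    ⁅∑ i ∈ s, c i • X i, ∑ j ∈ s, d j • Y j⁆ = ∑ i ∈ s, (c i * d i) • ⁅X i, Y i⁆ := by
  rw [sum_lie]
  refine Finset.sum_congr rfl fun i hi => ?_
  rw [lie_sum, Finset.sum_eq_single_of_mem i hi fun j hj hji => by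
    rw [smul_lie, lie_smul, h i hi j hj hji.symm, smul_zero, smul_zero]]
  rw [smul_lie, lie_smul, smul_smul, mul_comm]

noncomputable def Fsum (l : ℕ) (c : ℤ → ℝ) : Mat l :=
  ∑ m ∈ Finset.Icc (-(l : ℤ)) l, c m • Fpair l m

noncomputable def Esum (l : ℕ) (c : ℤ → ℝ) : Mat l :=
  ∑ m ∈ Finset.Icc (-(l : ℤ)) l, c m • Epair l m

noncomputable def Dsum (l : ℕ) (c : ℤ → ℝ) : Mat l :=
  ∑ m ∈ Finset.Icc (-(l : ℤ)) l, c m • Dpair l m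

section Sums

variable {l : ℕ}

lemma B3_eq_Fsum : B3 l = Fsum l (pc l) := rfl

lemma lie_Am_Fsum (c : ℤ → ℝ) : ⁅Am l, Fsum l c⁆ = (-(2 * l + 2) : ℝ) • Esum l c := by
  simp only [Fsum, Esum, lie_sum, lie_smul, lie_Am_Fpair, Finset.smul_sum, smul_comm (c _)]

lemma lie_Fsum_Esum (c d : ℤ → ℝ) :
    ⁅Fsum l c, Esum l d⁆ = Dsum l fun m => -2 * (c m * d m) := by
  rw [Fsum, Esum, lie_sum_smul_sum_smul_of_ne _ _ _ _ _ fun _ _ _ _ => lie_Fpair_Epair_of_ne]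
  refine Finset.sum_congr rfl fun m hm => ?_
  rw [Finset.mem_Icc] at hm
  rw [lie_Fpair_Epair_self hm.1 hm.2, smul_smul, mul_comm]

lemma lie_Dsum_Fsum (c d : ℤ → ℝ) :
    ⁅Dsum l c, Fsum l d⁆ = Esum l fun m => -2 * (c m * d m) := by
  rw [Dsum, Fsum, lie_sum_smul_sum_smul_of_ne _ _ _ _ _ fun _ _ _ _ => lie_Dpair_Fpair_of_ne]
  refine Finset.sum_congr rfl fun m hm => ?_
  rw [Finset.mem_Icc] at hm
  rw [lie_Dpair_Fpair_self hm.1 hm.2, smul_smul, mul_comm]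

end Sums

section Span

variable {l : ℕ} {L : LieSubalgebra ℝ (Mat l)}

lemma Esum_pc_mem (hA : Am l ∈ L) (hB : B3 l ∈ L) : Esum l (pc l) ∈ L := by
  have h := L.smul_mem (-(2 * l + 2) : ℝ)⁻¹ (L.lie_mem hA hB)
  rwa [B3_eq_Fsum, lie_Am_Fsum, inv_smul_smul₀ (neg_ne_zero.mpr (by positivity))] at h

lemma Esum_pc_sq_mul_mem (hB : B3 l ∈ L) {c : ℤ → ℝ} (hc : Esum l c ∈ L) :
    Esum l (fun m => pc l m ^ 2 * c m) ∈ L := by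
  have h := L.smul_mem (4⁻¹ : ℝ) (L.lie_mem (L.lie_mem hB hc) hB)
  rw [B3_eq_Fsum, lie_Fsum_Esum, lie_Dsum_Fsum, Esum, Finset.smul_sum] at h
  simp only [smul_smul] at h
  rw [Esum]
  convert h using 3 with m
  ring

lemma Esum_prod_mem (hA : Am l ∈ L) (hB : B3 l ∈ L) (t : Finset ℤ) :
    Esum l (fun m => (∏ i ∈ t, (pc l m ^ 2 - pc l i ^ 2)) * pc l m) ∈ L := by
  classical
  induction t using Finset.induction_on with
  | empty => simpa using Esum_pc_mem hA hB
  | insert i t hi ih =>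
    set g : ℤ → ℝ := fun m => (∏ i ∈ t, (pc l m ^ 2 - pc l i ^ 2)) * pc l m
    have hsplit : Esum l (fun m => (∏ k ∈ insert i t, (pc l m ^ 2 - pc l k ^ 2)) * pc l m) =
        Esum l (fun m => pc l m ^ 2 * g m) - pc l i ^ 2 • Esum l g := by
      simp only [Esum, Finset.smul_sum, ← Finset.sum_sub_distrib, smul_smul, ← sub_smul,
        Finset.prod_insert hi, g]
      congr! 2
      ring
    rw [hsplit]
    exact L.sub_mem (Esum_pc_sq_mul_mem hB ih) (L.smul_mem _ ih)

end Span

section Coefficients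

variable {l : ℕ} {m : ℤ}

lemma pc_abs : pc l |m| = pc l m := by
  simp [pc, Int.cast_abs, sq_abs]

lemma pc_neg : pc l (-m) = pc l m := by
  simp [pc]

lemma pc_sq (hm : |m| ≤ l + 1) :
    pc l m ^ 2 = (((l : ℝ) + 1) ^ 2 - (m : ℝ) ^ 2) / ((2 * (l : ℝ) + 1) * (2 * (l : ℝ) + 3)) := by
  obtain ⟨h1, h2⟩ := abs_le.mp hm
  have hsq : (m : ℝ) ^ 2 ≤ ((l : ℝ) + 1) ^ 2 :=
    sq_le_sq' (by exact_mod_cast h1) (by exact_mod_cast h2)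
  rw [pc, neg_sq, Real.sq_sqrt (div_nonneg (by linarith) (by positivity))]

lemma pc_ne_zero (hm : |m| ≤ l) : pc l m ≠ 0 := by
  obtain ⟨h1, h2⟩ := abs_le.mp hm
  have hsq : (m : ℝ) ^ 2 < ((l : ℝ) + 1) ^ 2 :=
    sq_lt_sq' (by linarith [(by exact_mod_cast h1 : -(l : ℝ) ≤ m)])
      (by linarith [(by exact_mod_cast h2 : (m : ℝ) ≤ l)])
  rw [pc, neg_ne_zero, Real.sqrt_ne_zero']
  exact div_pos (by linarith) (by positivity)

lemma abs_eq_of_pc_sq_eq {i j : ℤ} (hi : |i| ≤ l + 1) (hj : |j| ≤ l + 1)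
    (h : pc l i ^ 2 = pc l j ^ 2) : |i| = |j| := by
  rw [pc_sq hi, pc_sq hj, div_left_inj' (by positivity)] at h
  exact sq_eq_sq_iff_abs_eq_abs i j |>.mp (by exact_mod_cast (sub_right_inj.mp h))

end Coefficients

noncomputable def selector (l : ℕ) (j m : ℤ) : ℝ :=
  (∏ i ∈ (Finset.Icc 0 (l : ℤ)).erase j, (pc l m ^ 2 - pc l i ^ 2)) * pc l m

section Selector

variable {l : ℕ} {j m : ℤ}

lemma selector_neg : selector l j (-m) = selector l j m := by
  simp [selector, pc_neg]

lemma selector_eq_zero (hm : |m| ≤ l) (hmj : |m| ≠ j) : selector l j m = 0 := by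
  refine mul_eq_zero_of_left (Finset.prod_eq_zero (i := |m|) ?_ (by rw [pc_abs, sub_self])) _
  exact Finset.mem_erase.mpr ⟨hmj, Finset.mem_Icc.mpr ⟨abs_nonneg m, hm⟩⟩

lemma selector_self_ne_zero (hj : 0 ≤ j) (hjl : j ≤ l) : selector l j j ≠ 0 := by
  refine mul_ne_zero (Finset.prod_ne_zero_iff.mpr fun i hi => sub_ne_zero.mpr fun h => ?_)
    (pc_ne_zero (by rwa [abs_of_nonneg hj]))
  obtain ⟨hij, hi0, hil⟩ := Finset.mem_erase.mp hi |>.imp_right Finset.mem_Icc.mp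
  have := abs_eq_of_pc_sq_eq (by rw [abs_of_nonneg hj]; omega) (by rw [abs_of_nonneg hi0]; omega) h
  rw [abs_of_nonneg hj, abs_of_nonneg hi0] at this
  exact hij this.symm

lemma Esum_selector (hj : 0 ≤ j) (hjl : j ≤ l) :
    Esum l (selector l j) = ∑ m ∈ {-j, j}, selector l j m • Epair l m := by
  refine (Finset.sum_subset (fun m hm => ?_) fun m hm hmj => ?_).symm
  · rw [Finset.mem_insert, Finset.mem_singleton] at hm
    rw [Finset.mem_Icc]
    rcases hm with rfl | rfl <;> omega
  · rw [Finset.mem_Icc] at hm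
    rw [Finset.mem_insert, Finset.mem_singleton, not_or] at hmj
    rw [selector_eq_zero (abs_le.mpr hm) (by rcases abs_choice m with h | h <;> omega), zero_smul]

end Selector

/-- For every `j ∈ {0, 1, …, ℓ}`, the matrix `E_{(ℓ,-j),(ℓ+1,-j)} + E_{(ℓ,j),(ℓ+1,j)}`
belongs to the real Lie algebra generated by `A, B₁, B₂, B₃`. -/
theorem sum_elementary_mem (l : ℕ) (j : ℤ) (hj : 0 ≤ j ∧ j ≤ (l : ℤ)) :
    Em l ((l : ℤ), -j) ((l : ℤ) + 1, -j) + Em l ((l : ℤ), j) ((l : ℤ) + 1, j) ∈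
      LieSubalgebra.lieSpan ℝ (Mat l) {Am l, B1 l, B2 l, B3 l} := by
  obtain ⟨hj0, hjl⟩ := hj
  set L := LieSubalgebra.lieSpan ℝ (Mat l) {Am l, B1 l, B2 l, B3 l}
  have hmem : Esum l (selector l j) ∈ L :=
    Esum_prod_mem (LieSubalgebra.subset_lieSpan (by simp))
      (LieSubalgebra.subset_lieSpan (by simp)) _
  rw [Esum_selector hj0 hjl] at hmem
  have hsel := selector_self_ne_zero hj0 hjl
  change Epair l (-j) + Epair l j ∈ L
  rcases eq_or_ne j 0 with rfl | hj
  · rw [neg_zero, Finset.pair_eq_singleton, Finset.sum_singleton] at hmem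
    simpa [smul_smul, hsel, two_smul] using L.smul_mem (2 / selector l 0 0) hmem
  · rw [Finset.sum_pair (by omega), selector_neg, ← smul_add] at hmem
    simpa [hsel] using L.smul_mem (selector l j j)⁻¹ hmem
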